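/- Under homogeneous constant concentration η (and supply concentration α), the solution of the full two-constituent system (partial densities ρ¹, ρ²) is recovered from the reduced total-density system: if ρ solves Q̄_wᵀLM̄_w ρ̇ = Q_wᵀφ̲ − w and M_w(a²⊙ρ) + M_s(b²⊙s) = −LK(φ̲⊙|φ̲|)/(M̄_w ρ), then ρ¹ = (𝟙−η)⊙ρ and ρ² = η⊙ρ satisfy the two-constituent equations Q̄_wᵀLM̄_w ρ̇⁽ᵐ⁾ = Q_wᵀ(η̲⁽ᵐ⁾⊙φ̲) − η⁽ᵐ⁾⊙w (with η̲⁽ᵐ⁾ the corresponding constant edge concentration) and Σₘ σₘ²(M_w ρ⁽ᵐ⁾ + M_s s⁽ᵐ⁾) = −LK(φ̲⊙|φ̲|)/(M̄_w(ρ¹+ρ²)). -/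
import Mathlib


open Matrix

/-- Under homogeneous constant concentration η (supply concentration α), a solution
of the reduced total-density system yields, via ρ¹ = (1−η)ρ and ρ² = ηρ, a solution
of the full two-constituent lumped network equations. -/
theorem stmt13 {E n r : ℕ} (σ1 σ2 η α : ℝ)
    (hη : η ∈ Set.Icc (0 : ℝ) 1) (hα : α ∈ Set.Icc (0 : ℝ) 1)
    (L K : Matrix (Fin E) (Fin E) ℝ)
    (Mw Mwbar Qwbar Qw : Matrix (Fin E) (Fin n) ℝ)
    (Ms : Matrix (Fin E) (Fin r) ℝ)
    (ρ ρ' w : ℝ → Fin n → ℝ) (s : ℝ → Fin r → ℝ) (φ : ℝ → Fin E → ℝ)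
    (hderiv : ∀ i t, HasDerivAt (fun t => ρ t i) (ρ' t i) t)
    (hdyn : ∀ t, (Qwbarᵀ * L * Mwbar).mulVec (ρ' t) = Qwᵀ.mulVec (φ t) - w t)
    (hmom : ∀ t, Mw.mulVec (fun i => (σ1 ^ 2 * (1 - η) + σ2 ^ 2 * η) * ρ t i)
          + Ms.mulVec (fun i => (σ1 ^ 2 * (1 - α) + σ2 ^ 2 * α) * s t i)
        = fun k => -((L * K).mulVec (fun k => φ t k * |φ t k|) k) / (Mwbar.mulVec (ρ t) k)) :
    (∀ t, (Qwbarᵀ * L * Mwbar).mulVec (fun i => (1 - η) * ρ' t i)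
        = Qwᵀ.mulVec (fun k => (1 - η) * φ t k) - fun i => (1 - η) * w t i) ∧
    (∀ t, (Qwbarᵀ * L * Mwbar).mulVec (fun i => η * ρ' t i)
        = Qwᵀ.mulVec (fun k => η * φ t k) - fun i => η * w t i) ∧
    (∀ t, (fun k => σ1 ^ 2 * (Mw.mulVec (fun i => (1 - η) * ρ t i) k
                + Ms.mulVec (fun i => (1 - α) * s t i) k)
            + σ2 ^ 2 * (Mw.mulVec (fun i => η * ρ t i) k
                + Ms.mulVec (fun i => α * s t i) k))
        = fun k => -((L * K).mulVec (fun k => φ t k * |φ t k|) k)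
            / (Mwbar.mulVec (fun i => (1 - η) * ρ t i + η * ρ t i) k)) := by
  have key : ∀ {m k : ℕ} (A : Matrix (Fin m) (Fin k) ℝ) (c : ℝ) (v : Fin k → ℝ),
      A.mulVec (fun i => c * v i) = fun j => c * A.mulVec v j := by
    intro m k A c v
    funext j
    simp [Matrix.mulVec, dotProduct, Finset.mul_sum, mul_left_comm]
  refine ⟨?_, ?_, ?_⟩
  · intro t
    funext i
    have h := congrFun (hdyn t) i
    simp only [Pi.sub_apply] at h
    rw [key, key]
    simp only [Pi.sub_apply, h]
    ring
  · intro t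
    funext i
    have h := congrFun (hdyn t) i
    simp only [Pi.sub_apply] at h
    rw [key, key]
    simp only [Pi.sub_apply, h]
    ring
  · intro t
    funext k
    have h := congrFun (hmom t) k
    simp only [Pi.add_apply] at h
    have hρ : (fun i => (1 - η) * ρ t i + η * ρ t i) = ρ t := by
      funext i; ring
    rw [key, key, key, key, hρ]
    rw [key, key] at h
    linarith [h]
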